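/- (½-Hölder continuity in time of the phase volume) Let u : Ω × [0,T] → [-1,1] with u ∈ H¹(0,T; L²(Ω)) and suppose sup_{t} ∫_Ω (1/ε) W(u(·,t)) dx ≤ E₀ and ∫_0^T ∫_Ω ε |∂_t u|² dx dt ≤ E₀. Then for all 0 ≤ s ≤ t ≤ T, ∫_Ω |ψ(u(x,t)) − ψ(u(x,s))| dx ≤ √(2(t−s)) · E₀, where ψ(r) = ∫_{-1}^r √(2W). -/

import Mathlib

open MeasureTheory Filter Topology
open scoped ENNReal

noncomputable def W9 (s : ℝ) : ℝ := (1/2) * (1 - s^2)^2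

noncomputable def psi9 (r : ℝ) : ℝ := ∫ t in (-1:ℝ)..r, Real.sqrt (2 * W9 t)

lemma W9_nonneg (r : ℝ) : 0 ≤ W9 r := by unfold W9; positivity

lemma twoW9 (r : ℝ) : 2 * W9 r = (1 - r^2)^2 := by unfold W9; ring

lemma sqrt2W9 (r : ℝ) : Real.sqrt (2 * W9 r) = |1 - r^2| := by
  rw [twoW9, Real.sqrt_sq_eq_abs]

lemma phi9_cont : Continuous (fun r : ℝ => Real.sqrt (2 * W9 r)) := by
  have : (fun r : ℝ => Real.sqrt (2 * W9 r)) = fun r => |1 - r^2| := by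
    funext r; exact sqrt2W9 r
  rw [this]
  exact (continuous_const.sub (continuous_pow 2)).abs

lemma psi9_hasDeriv (r : ℝ) : HasDerivAt psi9 (Real.sqrt (2 * W9 r)) r := by
  exact intervalIntegral.integral_hasDerivAt_right
    (phi9_cont.intervalIntegrable _ _)
    (phi9_cont.stronglyMeasurableAtFilter _ _)
    phi9_cont.continuousAt

lemma twoW9_le_one {r : ℝ} (h : r ∈ Set.Icc (-1:ℝ) 1) : 2 * W9 r ≤ 1 := by
  rw [twoW9]
  have h1 : 0 ≤ r^2 := sq_nonneg r
  have h2 : r^2 ≤ 1 := by nlinarith [h.1, h.2]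
  nlinarith

lemma sqrt2W9_le_one {r : ℝ} (h : r ∈ Set.Icc (-1:ℝ) 1) : Real.sqrt (2 * W9 r) ≤ 1 := by
  rw [show (1:ℝ) = Real.sqrt 1 by simp]
  exact Real.sqrt_le_sqrt (by simpa using twoW9_le_one h)

lemma amgm9 {l : ℝ} (hl : 0 < l) (a b : ℝ) :
    |Real.sqrt (2 * W9 a) * b| ≤ 1/(2*l) * (2 * W9 a) + l/2 * b^2 := by
  set c := Real.sqrt (2 * W9 a) with hc
  have hc0 : 0 ≤ c := Real.sqrt_nonneg _
  have hcsq : c^2 = 2 * W9 a := Real.sq_sqrt (by nlinarith [W9_nonneg a])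
  have h2l : (0:ℝ) < 2*l := by linarith
  rw [abs_mul, abs_of_nonneg hc0, ← hcsq,
    show 1/(2*l) * c^2 + l/2 * b^2 = (c^2 + l^2*b^2)/(2*l) by field_simp,
    le_div_iff₀ h2l]
  nlinarith [sq_nonneg (c - l * |b|), sq_abs b, abs_nonneg b]

lemma null_of_inter_subset {α : Type*} [MeasurableSpace α] {μ : Measure α} {S M Z : Set α}
    (hM : MeasurableSet M) (hZ : μ.restrict S Z = 0) (hsub : M ∩ S ⊆ Z) :
    μ.restrict S M = 0 := by
  rw [Measure.restrict_apply hM]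
  apply le_antisymm _ zero_le
  have h1 : M ∩ S ⊆ toMeasurable (μ.restrict S) Z ∩ S :=
    fun x hx => ⟨subset_toMeasurable _ _ (hsub hx), hx.2⟩
  calc μ (M ∩ S) ≤ μ (toMeasurable (μ.restrict S) Z ∩ S) := measure_mono h1
    _ = μ.restrict S (toMeasurable (μ.restrict S) Z) :=
        (Measure.restrict_apply (measurableSet_toMeasurable _ _)).symm
    _ = 0 := by rw [measure_toMeasurable]; exact hZ
  

lemma lemM {α : Type*} [MeasurableSpace α] {μ : Measure α} {S N : Set α} {f g : α → ℝ}
    (hN : μ.restrict S N = 0) (h : ∀ x ∈ S, x ∉ N → |f x| ≤ g x)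
    (hg : Integrable g (μ.restrict S)) :
    ∫ x, f x ∂(μ.restrict S) ≤ ∫ x, g x ∂(μ.restrict S) := by
  set ρ := μ.restrict S with hρ
  have hgm := hg.aestronglyMeasurable
  set g₀ := hgm.mk g with hg₀
  have hgg₀ : g =ᵐ[ρ] g₀ := hgm.ae_eq_mk
  by_cases hf : Integrable f ρ
  · have hfm := hf.aestronglyMeasurable
    set f₀ := hfm.mk f with hf₀
    have hff₀ : f =ᵐ[ρ] f₀ := hfm.ae_eq_mk
    have hZ : ρ ({x | f x ≠ f₀ x} ∪ ({x | g x ≠ g₀ x} ∪ N)) = 0 := by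
      apply measure_union_null
      · exact hff₀
      · exact measure_union_null hgg₀ hN
    have key : ∀ᵐ x ∂ρ, |f₀ x| ≤ g₀ x := by
      rw [ae_iff]
      have hMmeas : MeasurableSet {x | ¬ |f₀ x| ≤ g₀ x} := by
        simp only [not_le]
        exact measurableSet_lt hgm.stronglyMeasurable_mk.measurable
          hfm.stronglyMeasurable_mk.measurable.abs
      refine null_of_inter_subset hMmeas hZ ?_
      rintro x ⟨hx1, hx2⟩
      by_contra hx3
      simp only [Set.mem_union, Set.mem_setOf_eq, not_or, not_not] at hx3
      obtain ⟨e1, e2, e3⟩ := hx3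
      exact hx1 (e1 ▸ e2 ▸ h x hx2 e3)
    have hf₀int : Integrable f₀ ρ := hf.congr hff₀
    calc ∫ x, f x ∂ρ = ∫ x, f₀ x ∂ρ := integral_congr_ae hff₀
      _ ≤ ∫ x, |f₀ x| ∂ρ := integral_mono hf₀int hf₀int.abs (fun x => le_abs_self _)
      _ ≤ ∫ x, g₀ x ∂ρ := integral_mono_ae hf₀int.abs (hg.congr hgg₀) key
      _ = ∫ x, g x ∂ρ := (integral_congr_ae hgg₀).symm
  · rw [integral_undef hf]
    apply integral_nonneg_of_ae
    have hZ : ρ ({x | g x ≠ g₀ x} ∪ N) = 0 := measure_union_null hgg₀ hN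
    have key : ∀ᵐ x ∂ρ, 0 ≤ g₀ x := by
      rw [ae_iff]
      have hMmeas : MeasurableSet {x | ¬ (0:ℝ) ≤ g₀ x} := by
        simp only [not_le]
        exact measurableSet_lt hgm.stronglyMeasurable_mk.measurable measurable_const
      refine null_of_inter_subset hMmeas hZ ?_
      rintro x ⟨hx1, hx2⟩
      by_contra hx3
      simp only [Set.mem_union, Set.mem_setOf_eq, not_or, not_not] at hx3
      obtain ⟨e2, e3⟩ := hx3
      exact hx1 (e2 ▸ le_trans (abs_nonneg _) (h x hx2 e3))
    filter_upwards [key, hgg₀] with x h1 h2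
    rw [h2]; exact h1


lemma exists_Btilde {X : Type*} [MeasurableSpace X] {ν : Measure X} [IsFiniteMeasure ν]
    {T s t : ℝ} (hT : 0 < T) (hs : 0 ≤ s) (hlt : s < t) (htT : t ≤ T)
    (w : ℝ → X → ℝ)
    (hwnn : ∀ r x, 0 ≤ w r x)
    (hwint : ∀ r ∈ Set.Icc (0:ℝ) T, Integrable (w r) ν)
    (C : ℝ) (hC : 0 ≤ C)
    (hwbd : ∀ r ∈ Set.Icc (0:ℝ) T, ∫ x, w r x ∂ν ≤ C)
    (G : Set X)
    (hGbound : ∀ r ∈ Set.Icc (0:ℝ) T, ∀ x ∈ G, w r x ≤ 1)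
    (hGcont : ∀ x ∈ G, ∀ τ ∈ Set.Icc (0:ℝ) T, ContinuousAt (fun r => w r x) τ) :
    ∃ B : X → ℝ, Integrable B ν ∧ (∫ x, B x ∂ν ≤ (t - s) * C) ∧
      ∀ x ∈ G, B x = ∫ τ in Set.Ioo s t, w τ x := by
  set μst : Measure ℝ := volume.restrict (Set.Ioo s t) with hμst
  haveI : IsFiniteMeasure μst := ⟨by rw [hμst, Measure.restrict_apply_univ]; exact measure_Ioo_lt_top⟩
  have hIooIcc : Set.Ioo s t ⊆ Set.Icc 0 T := fun τ hτ =>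
    ⟨le_trans hs hτ.1.le, le_trans hτ.2.le htT⟩
  set c : ℕ → ℤ → ℝ := fun n m => min T (max 0 ((m : ℝ) / ((n:ℝ)+1))) with hcdef
  set k : ℕ → ℝ → ℤ := fun n τ => ⌈τ * ((n:ℝ)+1)⌉ with hkdef
  have hcmem : ∀ n m, c n m ∈ Set.Icc (0:ℝ) T :=
    fun n m => ⟨le_min hT.le (le_max_left _ _), min_le_left _ _⟩
  have hkmeas : ∀ n, Measurable (k n) := fun n => (measurable_id.mul_const _).ceil
  have hconv : ∀ τ ∈ Set.Icc (0:ℝ) T, Tendsto (fun n => c n (k n τ)) atTop (𝓝 τ) := by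
    intro τ hτ
    have hn1 : ∀ n : ℕ, (0:ℝ) < (n:ℝ)+1 := fun n => by positivity
    have hrlow : ∀ n : ℕ, τ ≤ ((k n τ : ℤ) : ℝ) / ((n:ℝ)+1) := by
      intro n
      rw [le_div_iff₀ (hn1 n)]
      exact Int.le_ceil _
    have hrhigh : ∀ n : ℕ, ((k n τ : ℤ) : ℝ) / ((n:ℝ)+1) ≤ τ + 1/((n:ℝ)+1) := by
      intro n
      rw [div_le_iff₀ (hn1 n)]
      have h1 := Int.ceil_lt_add_one (τ * ((n:ℝ)+1))
      have h2 : ((k n τ : ℤ) : ℝ) < τ * ((n:ℝ)+1) + 1 := h1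
      have h3 : (1/((n:ℝ)+1)) * ((n:ℝ)+1) = 1 := by
        field_simp
      nlinarith [hn1 n]
    have hlow : ∀ n : ℕ, τ ≤ c n (k n τ) :=
      fun n => le_min hτ.2 (le_trans (hrlow n) (le_max_right _ _))
    have hhigh : ∀ n : ℕ, c n (k n τ) ≤ τ + 1/((n:ℝ)+1) := by
      intro n
      refine le_trans (min_le_right _ _) ?_
      rw [max_eq_right (le_trans hτ.1 (hrlow n))]
      exact hrhigh n
    have htend : Tendsto (fun n : ℕ => τ + 1/((n:ℝ)+1)) atTop (𝓝 τ) := by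
      have h := tendsto_one_div_add_atTop_nhds_zero_nat (𝕜 := ℝ)
      have := tendsto_const_nhds (x := τ) (f := atTop (α := ℕ)) |>.add h
      simpa using this
    exact tendsto_of_tendsto_of_tendsto_of_le_of_le tendsto_const_nhds htend hlow hhigh
  set J : ℕ → ℝ × X → ℝ := fun n p => w (c n (k n p.1)) p.2 with hJdef
  have hJslice : ∀ n (m : ℤ), Integrable (fun x => w (c n m) x) ν :=
    fun n m => hwint _ (hcmem n m)
  have hJint : ∀ n, Integrable (J n) (μst.prod ν) := by
    intro n
    have hmk : ∀ m : ℤ, ∃ vm : X → ℝ, StronglyMeasurable vm ∧ (fun x => w (c n m) x) =ᵐ[ν] vm :=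
      fun m => ⟨(hJslice n m).aestronglyMeasurable.mk _,
        (hJslice n m).aestronglyMeasurable.stronglyMeasurable_mk,
        (hJslice n m).aestronglyMeasurable.ae_eq_mk⟩
    choose vm hvm1 hvm2 using hmk
    have hJ'meas : Measurable (fun p : ℝ × X => vm (k n p.1) p.2) := by
      have h1 : Measurable (fun q : X × ℤ => vm q.2 q.1) :=
        measurable_from_prod_countable_left (fun m => (hvm1 m).measurable)
      exact h1.comp (measurable_snd.prodMk ((hkmeas n).comp measurable_fst))
    have hae : (fun p : ℝ × X => vm (k n p.1) p.2) =ᵐ[μst.prod ν] J n := by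
      rw [EventuallyEq, ae_iff]
      have hsub : {p : ℝ × X | ¬ vm (k n p.1) p.2 = J n p} ⊆
          ⋃ m : ℤ, Set.univ ×ˢ {x | ¬ w (c n m) x = vm m x} := by
        intro p hp
        simp only [Set.mem_iUnion, Set.mem_prod, Set.mem_univ, true_and, Set.mem_setOf_eq]
        refine ⟨k n p.1, fun h => ?_⟩
        exact hp (by simp only [hJdef]; exact h.symm)
      refine measure_mono_null hsub (measure_iUnion_null fun m => ?_)
      rw [Measure.prod_prod]
      have h0 : ν {x | ¬ w (c n m) x = vm m x} = 0 := by
        have h := hvm2 m; rw [EventuallyEq, ae_iff] at h; exact h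
      rw [h0, mul_zero]
    have hIvm : Integrable (fun p : ℝ × X => vm (k n p.1) p.2) (μst.prod ν) := by
      refine (integrable_prod_iff hJ'meas.aestronglyMeasurable).2 ⟨?_, ?_⟩
      · exact Eventually.of_forall fun τ => (hJslice n (k n τ)).congr (hvm2 (k n τ))
      · have hmeas : Measurable (fun τ => ∫ x, ‖vm (k n τ) x‖ ∂ν) :=
          (Measurable.of_discrete (f := fun m : ℤ => ∫ x, ‖vm m x‖ ∂ν)).comp (hkmeas n)
        refine Integrable.mono' (integrable_const C) hmeas.aestronglyMeasurable ?_
        refine Eventually.of_forall fun τ => ?_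
        have heq : ∫ x, ‖vm (k n τ) x‖ ∂ν = ∫ x, w (c n (k n τ)) x ∂ν := by
          refine integral_congr_ae ?_
          filter_upwards [hvm2 (k n τ)] with x hx
          rw [← hx, Real.norm_eq_abs, abs_of_nonneg (hwnn _ _)]
        rw [Real.norm_eq_abs, abs_of_nonneg (integral_nonneg fun x => norm_nonneg _), heq]
        exact hwbd _ (hcmem n _)
    exact hIvm.congr hae
  have hJbound : ∀ n (τ : ℝ), ∫ x, J n (τ, x) ∂ν ≤ C :=
    fun n τ => hwbd (c n (k n τ)) (hcmem n (k n τ))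
  have hJnonneg : ∀ n (p : ℝ × X), 0 ≤ J n p := fun n p => hwnn _ _
  set S : ℕ → X → ℝ := fun n x => ∫ τ, J n (τ, x) ∂μst with hSdef
  have hSint : ∀ n, Integrable (S n) ν := fun n => (hJint n).integral_prod_right
  have hSnonneg : ∀ n x, 0 ≤ S n x := fun n x => integral_nonneg (fun τ => hJnonneg n _)
  have hSbound : ∀ n, ∫ x, S n x ∂ν ≤ (t-s) * C := by
    intro n
    have h1 : ∫ x, S n x ∂ν = ∫ τ, (∫ x, J n (τ, x) ∂ν) ∂μst := by
      rw [← integral_prod_symm _ (hJint n), integral_prod _ (hJint n)]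
    rw [h1]
    calc ∫ τ, (∫ x, J n (τ, x) ∂ν) ∂μst ≤ ∫ _τ, C ∂μst :=
          integral_mono ((hJint n).integral_prod_left) (integrable_const C) (fun τ => hJbound n τ)
      _ = ((μst Set.univ).toReal) * C := by rw [integral_const, smul_eq_mul]; rfl
      _ = (t-s) * C := by
          rw [hμst, Measure.restrict_apply_univ, Real.volume_Ioo,
            ENNReal.toReal_ofReal (by linarith)]
  have hSlint : ∀ n, ∫⁻ x, ENNReal.ofReal (S n x) ∂ν ≤ ENNReal.ofReal ((t-s)*C) := by
    intro n
    rw [← ofReal_integral_eq_lintegral_ofReal (hSint n) (Eventually.of_forall (hSnonneg n))]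
    exact ENNReal.ofReal_le_ofReal (hSbound n)
  have haemeas : ∀ n, AEMeasurable (fun x => ENNReal.ofReal (S n x)) ν :=
    fun n => ENNReal.measurable_ofReal.comp_aemeasurable
      (hSint n).aestronglyMeasurable.aemeasurable
  set Be : X → ℝ≥0∞ := fun x => liminf (fun n => ENNReal.ofReal (S n x)) atTop with hBedef
  have hBemeas : AEMeasurable Be ν := by
    have h1 : Measurable (fun x => liminf (fun n => (haemeas n).mk _ x) atTop) :=
      Measurable.liminf (fun n => (haemeas n).measurable_mk)
    refine ⟨_, h1, ?_⟩
    have h2 : ∀ᵐ x ∂ν, ∀ n : ℕ, ENNReal.ofReal (S n x) = (haemeas n).mk _ x :=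
      ae_all_iff.2 (fun n => (haemeas n).ae_eq_mk)
    filter_upwards [h2] with x hx
    simp only [hBedef]
    congr 1
    funext n
    exact hx n
  have hBelint : ∫⁻ x, Be x ∂ν ≤ ENNReal.ofReal ((t-s)*C) := by
    refine le_trans (lintegral_liminf_le' haemeas) ?_
    exact liminf_le_of_frequently_le' (Frequently.of_forall hSlint)
  have hBetop : ∫⁻ x, Be x ∂ν ≠ ⊤ := (lt_of_le_of_lt hBelint ENNReal.ofReal_lt_top).ne
  refine ⟨fun x => (Be x).toReal, integrable_toReal_of_lintegral_ne_top hBemeas hBetop, ?_, ?_⟩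
  · rw [integral_toReal hBemeas (ae_lt_top' hBemeas hBetop)]
    calc (∫⁻ x, Be x ∂ν).toReal ≤ (ENNReal.ofReal ((t-s)*C)).toReal :=
          ENNReal.toReal_mono (by simp) hBelint
      _ = (t-s)*C := ENNReal.toReal_ofReal (by nlinarith)
  · intro x hx
    have hTend : Tendsto (fun n => S n x) atTop (𝓝 (∫ τ in Set.Ioo s t, w τ x)) := by
      apply tendsto_integral_of_dominated_convergence (bound := fun _ => (1:ℝ))
      · intro n
        have h1 : Measurable (fun τ => w (c n (k n τ)) x) :=
          (Measurable.of_discrete (f := fun m : ℤ => w (c n m) x)).comp (hkmeas n)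
        exact h1.aestronglyMeasurable
      · exact integrable_const 1
      · intro n
        refine Eventually.of_forall fun τ => ?_
        rw [Real.norm_eq_abs, abs_of_nonneg (hwnn _ _)]
        exact hGbound _ (hcmem n _) x hx
      · filter_upwards [ae_restrict_mem measurableSet_Ioo] with τ hτ
        have hτIcc := hIooIcc hτ
        exact ((hGcont x hx τ hτIcc).tendsto).comp (hconv τ hτIcc)
    have hofReal : Tendsto (fun n => ENNReal.ofReal (S n x)) atTop
        (𝓝 (ENNReal.ofReal (∫ τ in Set.Ioo s t, w τ x))) :=
      (ENNReal.continuous_ofReal.tendsto _).comp hTend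
    have hlim : Be x = ENNReal.ofReal (∫ τ in Set.Ioo s t, w τ x) := hofReal.liminf_eq
    show (Be x).toReal = ∫ τ in Set.Ioo s t, w τ x
    rw [hlim, ENNReal.toReal_ofReal (integral_nonneg (fun τ => hwnn _ _))]


lemma W9_cont : Continuous W9 := by
  unfold W9; fun_prop

theorem stmt9 {d : ℕ} (Ω : Set (EuclideanSpace ℝ (Fin d))) (hΩ : Bornology.IsBounded Ω)
    (T ε E₀ : ℝ) (hT : 0 < T) (hε : 0 < ε) (hE₀ : 0 ≤ E₀)
    (u u' : ℝ → EuclideanSpace ℝ (Fin d) → ℝ)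
    (hrange : ∀ t ∈ Set.Icc (0:ℝ) T, ∀ x ∈ Ω, u t x ∈ Set.Icc (-1:ℝ) 1)
    (hderiv : ∀ x ∈ Ω, ∀ t ∈ Set.Icc (0:ℝ) T, HasDerivAt (fun τ => u τ x) (u' t x) t)
    (hWbound : ∀ t ∈ Set.Icc (0:ℝ) T, ∫ x in Ω, (1/ε) * W9 (u t x) ≤ E₀)
    (hWint : ∀ t ∈ Set.Icc (0:ℝ) T, IntegrableOn (fun x => W9 (u t x)) Ω)
    (hdint : IntegrableOn (fun p : ℝ × EuclideanSpace ℝ (Fin d) => ε * (u' p.1 p.2)^2)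
      ((Set.Ioo 0 T) ×ˢ Ω))
    (hdiss : ∫ t in (0:ℝ)..T, ∫ x in Ω, ε * (u' t x)^2 ≤ E₀) :
    ∀ s t : ℝ, 0 ≤ s → s ≤ t → t ≤ T →
      ∫ x in Ω, |psi9 (u t x) - psi9 (u s x)| ≤ Real.sqrt (2 * (t - s)) * E₀ := by
  intro s t hs hst htT
  rcases eq_or_lt_of_le hst with rfl | hlt
  · simp
  have hIoosub : Set.Ioo s t ⊆ Set.Ioo 0 T := Set.Ioo_subset_Ioo hs htT
  have hIccsub : Set.Icc s t ⊆ Set.Icc 0 T := Set.Icc_subset_Icc hs htT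
  have hIooIcc : Set.Ioo s t ⊆ Set.Icc 0 T := fun τ hτ =>
    ⟨le_trans hs hτ.1.le, le_trans hτ.2.le htT⟩
  have hδpos : 0 < t - s := sub_pos.2 hlt
  set r2 : ℝ := Real.sqrt (2*(t-s)) with hr2def
  have hr2pos : 0 < r2 := Real.sqrt_pos.2 (by linarith)
  have hr2sq : r2^2 = 2*(t-s) := Real.sq_sqrt (by linarith)
  set l : ℝ := ε * r2 with hldef
  have hlpos : 0 < l := mul_pos hε hr2pos
  haveI hνf : IsFiniteMeasure (volume.restrict Ω : Measure (EuclideanSpace ℝ (Fin d))) :=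
    ⟨by rw [Measure.restrict_apply_univ]; exact hΩ.measure_lt_top⟩
  haveI : IsFiniteMeasure (volume.restrict (Set.Ioo s t) : Measure ℝ) :=
    ⟨by rw [Measure.restrict_apply_univ]; exact measure_Ioo_lt_top⟩
  haveI : IsFiniteMeasure (volume.restrict (Set.Ioo 0 T) : Measure ℝ) :=
    ⟨by rw [Measure.restrict_apply_univ]; exact measure_Ioo_lt_top⟩
  have hWb2 : ∀ r ∈ Set.Icc (0:ℝ) T, ∫ x in Ω, W9 (u r x) ≤ ε * E₀ := by
    intro r hr
    have h1 := hWbound r hr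
    rw [integral_const_mul] at h1
    have h3 := mul_le_mul_of_nonneg_left h1 hε.le
    rw [← mul_assoc, mul_one_div_cancel hε.ne', one_mul] at h3
    exact h3
  obtain ⟨B, hBint, hBval, hBeq⟩ := exists_Btilde (ν := volume.restrict Ω) hT hs hlt htT
    (fun r x => W9 (u r x)) (fun r x => W9_nonneg _) (fun r hr => hWint r hr)
    (ε*E₀) (by positivity) (fun r hr => hWb2 r hr) Ω
    (fun r hr x hx => by nlinarith [twoW9_le_one (hrange r hr x hx)])
    (fun x hx τ hτ => (W9_cont.continuousAt).comp (hderiv x hx τ hτ).continuousAt)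
  have hprodrw : ∀ A : Set ℝ, (volume.restrict A).prod (volume.restrict Ω)
      = (volume : Measure (ℝ × EuclideanSpace ℝ (Fin d))).restrict (A ×ˢ Ω) := by
    intro A
    rw [Measure.prod_restrict, ← Measure.volume_eq_prod]
  have hdint0 : Integrable (fun p : ℝ × EuclideanSpace ℝ (Fin d) => ε * (u' p.1 p.2)^2)
      ((volume.restrict (Set.Ioo 0 T)).prod (volume.restrict Ω)) := by
    rw [hprodrw]; exact hdint
  have hdintst : Integrable (fun p : ℝ × EuclideanSpace ℝ (Fin d) => ε * (u' p.1 p.2)^2)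
      ((volume.restrict (Set.Ioo s t)).prod (volume.restrict Ω)) := by
    rw [hprodrw]
    exact hdint.mono_set (Set.prod_mono hIoosub (subset_refl Ω))
  have hAint : Integrable (fun x => ∫ τ in Set.Ioo s t, ε * (u' τ x)^2) (volume.restrict Ω) :=
    hdintst.integral_prod_right
  have hAval : ∫ x in Ω, (∫ τ in Set.Ioo s t, ε * (u' τ x)^2) ≤ E₀ := by
    have h1 : ∫ x in Ω, (∫ τ in Set.Ioo s t, ε * (u' τ x)^2)
        = ∫ p in (Set.Ioo s t ×ˢ Ω), ε * (u' p.1 p.2)^2 := by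
      rw [← hprodrw]
      exact (integral_prod_symm _ hdintst).symm
    have h2 : ∫ p in (Set.Ioo s t ×ˢ Ω), (ε * (u' p.1 p.2)^2)
        ≤ ∫ p in (Set.Ioo 0 T ×ˢ Ω), ε * (u' p.1 p.2)^2 :=
      setIntegral_mono_set hdint
        (Eventually.of_forall (fun p => by positivity))
        (HasSubset.Subset.eventuallyLE (Set.prod_mono hIoosub (subset_refl Ω)))
    have h3 : ∫ p in (Set.Ioo 0 T ×ˢ Ω), (ε * (u' p.1 p.2)^2)
        = ∫ τ in Set.Ioo 0 T, (∫ x in Ω, ε * (u' τ x)^2) := by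
      rw [← hprodrw]
      exact integral_prod _ hdint0
    have h4 : ∫ τ in Set.Ioo 0 T, (∫ x in Ω, ε * (u' τ x)^2) ≤ E₀ := by
      rw [← MeasureTheory.integral_Ioc_eq_integral_Ioo, ← intervalIntegral.integral_of_le hT.le]
      exact hdiss
    rw [h1]
    exact le_trans h2 (le_trans (le_of_eq h3) h4)
  have hslices := hdint0.prod_left_ae
  set N : Set (EuclideanSpace ℝ (Fin d)) :=
    {y | ¬ Integrable (fun τ => ε * (u' τ y)^2) (volume.restrict (Set.Ioo 0 T))} with hNdef
  have hN : (volume.restrict Ω) N = 0 := by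
    have := ae_iff.1 hslices
    exact this
  have hpt : ∀ x ∈ Ω, x ∉ N →
      |psi9 (u t x) - psi9 (u s x)|
        ≤ 1/l * B x + l/(2*ε) * ∫ τ in Set.Ioo s t, ε * (u' τ x)^2 := by
    intro x hx hxN
    rw [hNdef, Set.mem_setOf_eq, not_not] at hxN
    have hI2' : Integrable (fun τ => ε * (u' τ x)^2) (volume.restrict (Set.Ioo s t)) :=
      hxN.mono_measure (Measure.restrict_mono hIoosub le_rfl)
    have hI2 : Integrable (fun τ => (u' τ x)^2) (volume.restrict (Set.Ioo s t)) := by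
      have heq : (fun τ => (u' τ x)^2) = fun τ => (1/ε) * (ε * (u' τ x)^2) := by
        funext τ; field_simp
      rw [heq]
      exact hI2'.const_mul _
    have hu'meas : AEStronglyMeasurable (fun τ => u' τ x) (volume.restrict (Set.Ioo s t)) := by
      refine (measurable_deriv (fun σ => u σ x)).aestronglyMeasurable.congr ?_
      filter_upwards [ae_restrict_mem measurableSet_Ioo] with τ hτ
      exact (hderiv x hx τ (hIooIcc hτ)).deriv
    have hu'int : Integrable (fun τ => u' τ x) (volume.restrict (Set.Ioo s t)) := by
      refine Integrable.mono' ((integrable_const 1).add hI2) hu'meas ?_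
      refine Eventually.of_forall fun τ => ?_
      rw [Real.norm_eq_abs]
      simp only [Pi.add_apply]
      nlinarith [sq_nonneg (|u' τ x| - 1), sq_abs (u' τ x), abs_nonneg (u' τ x)]
    have hucont : ∀ τ ∈ Set.Icc s t, ContinuousAt (fun σ => u σ x) τ :=
      fun τ hτ => (hderiv x hx τ (hIccsub hτ)).continuousAt
    have hWcont : ContinuousOn (fun τ => Real.sqrt (2 * W9 (u τ x))) (Set.Ioo s t) := by
      intro τ hτ
      exact (phi9_cont.continuousAt.comp (hucont τ (Set.Ioo_subset_Icc_self hτ))).continuousWithinAt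
    have hW9cont : ContinuousOn (fun τ => W9 (u τ x)) (Set.Ioo s t) := by
      intro τ hτ
      exact (W9_cont.continuousAt.comp (hucont τ (Set.Ioo_subset_Icc_self hτ))).continuousWithinAt
    have hrange' : ∀ τ ∈ Set.Ioo s t, u τ x ∈ Set.Icc (-1:ℝ) 1 :=
      fun τ hτ => hrange τ (hIooIcc hτ) x hx
    have hφu'int : Integrable (fun τ => Real.sqrt (2 * W9 (u τ x)) * u' τ x)
        (volume.restrict (Set.Ioo s t)) := by
      refine Integrable.mono' hu'int.abs
        ((hWcont.aestronglyMeasurable measurableSet_Ioo).mul hu'meas) ?_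
      filter_upwards [ae_restrict_mem measurableSet_Ioo] with τ hτ
      rw [Real.norm_eq_abs, abs_mul]
      have h1 : |Real.sqrt (2 * W9 (u τ x))| ≤ 1 := by
        rw [abs_of_nonneg (Real.sqrt_nonneg _)]
        exact sqrt2W9_le_one (hrange' τ hτ)
      exact le_trans (mul_le_mul_of_nonneg_right h1 (abs_nonneg _)) (by rw [one_mul])
    have hW9int : Integrable (fun τ => W9 (u τ x)) (volume.restrict (Set.Ioo s t)) := by
      refine Integrable.mono' (integrable_const 1)
        (hW9cont.aestronglyMeasurable measurableSet_Ioo) ?_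
      filter_upwards [ae_restrict_mem measurableSet_Ioo] with τ hτ
      rw [Real.norm_eq_abs, abs_of_nonneg (W9_nonneg _)]
      nlinarith [twoW9_le_one (hrange' τ hτ)]
    have hFTC : psi9 (u t x) - psi9 (u s x)
        = ∫ τ in s..t, Real.sqrt (2 * W9 (u τ x)) * u' τ x := by
      refine (intervalIntegral.integral_eq_sub_of_hasDerivAt
        (f := fun τ => psi9 (u τ x))
        (f' := fun τ => Real.sqrt (2 * W9 (u τ x)) * u' τ x) ?_ ?_).symm
      · intro τ hτ
        rw [Set.uIcc_of_le hst] at hτ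
        exact (psi9_hasDeriv (u τ x)).comp τ (hderiv x hx τ (hIccsub hτ))
      · exact (intervalIntegrable_iff_integrableOn_Ioo_of_le hst).2 hφu'int
    calc |psi9 (u t x) - psi9 (u s x)|
        = |∫ τ in s..t, Real.sqrt (2 * W9 (u τ x)) * u' τ x| := by rw [hFTC]
      _ ≤ ∫ τ in s..t, |Real.sqrt (2 * W9 (u τ x)) * u' τ x| :=
          intervalIntegral.abs_integral_le_integral_abs hst
      _ = ∫ τ in Set.Ioo s t, |Real.sqrt (2 * W9 (u τ x)) * u' τ x| := by
          rw [intervalIntegral.integral_of_le hst, MeasureTheory.integral_Ioc_eq_integral_Ioo]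
      _ ≤ ∫ τ in Set.Ioo s t, (1/l * W9 (u τ x) + l/(2*ε) * (ε * (u' τ x)^2)) := by
          refine setIntegral_mono_on hφu'int.abs
            ((hW9int.const_mul _).add (hI2'.const_mul _)) measurableSet_Ioo ?_
          intro τ hτ
          have h := amgm9 hlpos (u τ x) (u' τ x)
          have heq : 1/(2*l) * (2 * W9 (u τ x)) + l/2 * (u' τ x)^2
              = 1/l * W9 (u τ x) + l/(2*ε) * (ε * (u' τ x)^2) := by
            field_simp
          rw [← heq]
          exact h
      _ = 1/l * B x + l/(2*ε) * ∫ τ in Set.Ioo s t, ε * (u' τ x)^2 := by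
          rw [integral_add (hW9int.const_mul _) (hI2'.const_mul _),
            integral_const_mul, integral_const_mul, hBeq x hx]
  have hmain : ∫ x in Ω, |psi9 (u t x) - psi9 (u s x)|
      ≤ ∫ x in Ω, (1/l * B x + l/(2*ε) * ∫ τ in Set.Ioo s t, ε * (u' τ x)^2) := by
    refine lemM hN (fun x hx hxN => ?_) ((hBint.const_mul _).add (hAint.const_mul _))
    rw [abs_abs]
    exact hpt x hx hxN
  refine le_trans hmain ?_
  rw [integral_add (hBint.const_mul _) (hAint.const_mul _), integral_const_mul, integral_const_mul]
  have h1 : 1/l * ∫ x in Ω, B x ≤ 1/l * ((t-s) * (ε*E₀)) :=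
    mul_le_mul_of_nonneg_left hBval (by positivity)
  have h2 : l/(2*ε) * ∫ x in Ω, (∫ τ in Set.Ioo s t, ε*(u' τ x)^2) ≤ l/(2*ε) * E₀ :=
    mul_le_mul_of_nonneg_left hAval (by positivity)
  have harith : 1/l * ((t-s) * (ε*E₀)) + l/(2*ε) * E₀ = r2 * E₀ := by
    rw [hldef]
    field_simp
    linear_combination (-E₀) * hr2sq
  linarith [h1, h2]
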